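/- Let G be a graph that minimally biconnects a set Q of terminals. Then for any pair of terminals x, y ∈ Q, for any two internally vertex-disjoint x-to-y paths P_1, P_2 in G, every path in G connecting a vertex of P_1 to a vertex of P_2 (other than along P_1 ∪ P_2) contains a vertex of Q. -/

import Mathlib

open SimpleGraph

universe u

variable {V : Type u}

/-- Two walks with the same endpoints are internally vertex-disjoint. -/
def IntDisjoint {G : SimpleGraph V} {x y : V} (p q : G.Walk x y) : Prop :=
  ∀ v ∈ p.support, v ∈ q.support → v = x ∨ v = y

/-- There are `k` pairwise internally vertex-disjoint `x`-`y` paths in `G`. -/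
def ConnK (G : SimpleGraph V) (k : ℕ) (x y : V) : Prop :=
  ∃ P : Fin k → G.Walk x y, (∀ i, (P i).IsPath) ∧
    ∀ i j, i ≠ j → IntDisjoint (P i) (P j)

/-- `G` is `(Q,r)`-vertex-connected. -/
def QRConn (G : SimpleGraph V) (Q : Set V) (r : V → ℕ) : Prop :=
  ∀ x ∈ Q, ∀ y ∈ Q, x ≠ y → ConnK G (min (r x) (r y)) x y

/-- Delete a vertex (isolate it). -/
def delV (G : SimpleGraph V) (v : V) : SimpleGraph V where
  Adj a b := G.Adj a b ∧ a ≠ v ∧ b ≠ v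
  symm := by constructor; intro a b h; exact ⟨h.1.symm, h.2.2, h.2.1⟩
  loopless := by constructor; intro a h; exact G.ne_of_adj h.1 rfl

/-- `G` is minimally `(Q,r)`-vertex-connected: it is `(Q,r)`-vertex-connected but
deleting any edge or any vertex destroys this property. -/
def MinQR (G : SimpleGraph V) (Q : Set V) (r : V → ℕ) : Prop :=
  QRConn G Q r ∧ (∀ e ∈ G.edgeSet, ¬ QRConn (G.deleteEdges {e}) Q r) ∧
    ∀ v : V, ¬ QRConn (delV G v) Q r

/-- Biconnected: at least 3 vertices, connected, and no cut vertex. -/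
def Biconnected (G : SimpleGraph V) : Prop :=
  3 ≤ Nat.card V ∧ G.Connected ∧ ∀ v : V, (SimpleGraph.induce {w | w ≠ v} G).Connected

/-- Three-vertex-connected: more than 3 vertices and removing any at most 2
vertices leaves the graph connected. -/
def ThreeConnected (G : SimpleGraph V) : Prop :=
  4 ≤ Nat.card V ∧ ∀ s : Set V, s.ncard ≤ 2 → (SimpleGraph.induce sᶜ G).Connected

/-- Degree of a vertex. -/
noncomputable def vdeg (G : SimpleGraph V) (v : V) : ℕ := (G.neighborSet v).ncard

/-- The contracted version of `G`: suppress all degree-2 vertices.  Two vertices of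
degree `≠ 2` are adjacent iff they are joined by a path all of whose internal
vertices have degree 2. -/
def suppress (G : SimpleGraph V) : SimpleGraph {v : V // vdeg G v ≠ 2} where
  Adj u v := u ≠ v ∧ ∃ p : G.Walk u.1 v.1, p.IsPath ∧
      ∀ w ∈ p.support, w ≠ u.1 → w ≠ v.1 → vdeg G w = 2
  symm := by
    constructor
    rintro u v ⟨hne, p, hp, hint⟩
    refine ⟨hne.symm, p.reverse, hp.reverse, ?_⟩
    intro w hw h1 h2
    rw [SimpleGraph.Walk.support_reverse, List.mem_reverse] at hw
    exact hint w hw h2 h1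
  loopless := by constructor; intro u h; exact h.1 rfl

/-- The removal operation of Holton–Jackson–Saito–Wormald: delete the edge `uv`,
suppress any resulting degree-2 vertices and simplify parallel edges; the edge is
removable when the result is three-connected. -/
def Removable (G : SimpleGraph V) (u v : V) : Prop :=
  ThreeConnected (suppress (G.deleteEdges {s(u, v)}))

/-!
Suppose a path `R = a c ⋯ b` from `p1` to `p2` avoids `Q`, and take `R` shortest. By
edge-minimality, `G - ac` has no two internally disjoint paths between some terminals `s, t`, so by
Menger's theorem a vertex `z` separates them in `G - ac`, and `ac` joins the two sides in `G - z`.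
The vertex `z` lies on `R`: otherwise one arc of the cycle `p1 ∪ p2` followed by `R` would join `a`
to `c` in `G - ac - z`. A terminal `τ ∈ {s, t}` separated from `x` has two internally disjoint paths
to `x` in `G`; one of them uses `ac`, the other passes through `z`, and the stretch of `R` between
them is a shorter terminal-free path joining two internally disjoint paths between terminals.
-/

namespace SimpleGraph.Walk

variable {G H : SimpleGraph V} {u v w z : V}

lemma reachable_of_forall_dart (p : G.Walk u v) (h : ∀ d ∈ p.darts, H.Reachable d.fst d.snd) :
    H.Reachable u v := by
  induction p with
  | nil => rfl
  | cons _ p ih =>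
    simp only [darts_cons, List.mem_cons, forall_eq_or_imp] at h
    exact h.1.trans (ih h.2)

lemma reachable_delV (p : G.Walk u v) (hz : z ∉ p.support) : (delV G z).Reachable u v :=
  p.reachable_of_forall_dart fun d hd => Adj.reachable
    ⟨d.adj, fun h => hz (h ▸ p.dart_fst_mem_support_of_mem_darts hd),
      fun h => hz (h ▸ p.dart_snd_mem_support_of_mem_darts hd)⟩

lemma reachable_delV_deleteEdges {e : Sym2 V} (p : G.Walk u v) (he : e ∉ p.edges)
    (hz : z ∉ p.support) : (delV (G.deleteEdges {e}) z).Reachable u v :=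
  (p.toDeleteEdge e he).reachable_delV (by rwa [support_transfer])

lemma reachable_delV_deleteEdges_of_reachable {a c : V} (p : G.Walk u v) (hz : z ∉ p.support)
    (hac : (delV (G.deleteEdges {s(a, c)}) z).Reachable a c) :
    (delV (G.deleteEdges {s(a, c)}) z).Reachable u v := by
  refine p.reachable_of_forall_dart fun d hd => ?_
  have hfst : d.fst ≠ z := fun h => hz (h ▸ p.dart_fst_mem_support_of_mem_darts hd)
  have hsnd : d.snd ≠ z := fun h => hz (h ▸ p.dart_snd_mem_support_of_mem_darts hd)
  by_cases he : s(d.fst, d.snd) = s(a, c)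
  · rcases Sym2.eq_iff.mp he with ⟨h1, h2⟩ | ⟨h1, h2⟩
    · rw [h1, h2]; exact hac
    · rw [h1, h2]; exact hac.symm
  · exact Adj.reachable ⟨(deleteEdges_adj ..).mpr ⟨d.adj, he⟩, hfst, hsnd⟩

lemma IsPath.append_of_forall_mem {p : G.Walk u w} {q : G.Walk w v} (hp : p.IsPath)
    (hq : q.IsPath) (h : ∀ x ∈ p.support, x ∈ q.support → x = w) : (p.append q).IsPath := by
  have hq' := hq.support_nodup
  rw [← q.cons_tail_support, List.nodup_cons] at hq'
  rw [isPath_def, support_append]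
  refine hp.support_nodup.append hq'.2 fun x hxp hxq => ?_
  obtain rfl := h x hxp (List.mem_of_mem_tail hxq)
  exact hq'.1 hxq

lemma notMem_support_delV (p : (delV G z).Walk u v) (hu : u ≠ z) : z ∉ p.support := by
  induction p with
  | nil => simpa using hu.symm
  | cons h p ih =>
    rw [support_cons, List.mem_cons, not_or]
    exact ⟨hu.symm, ih h.2.2⟩

variable [DecidableEq V]

lemma IsPath.eq_of_mem_takeUntil_of_mem_dropUntil {p : G.Walk u v} (hp : p.IsPath)
    (h : w ∈ p.support) (h1 : z ∈ (p.takeUntil w h).support)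
    (h2 : z ∈ (p.dropUntil w h).support) : z = w := by
  by_contra hne
  have hnodup := hp.support_nodup
  rw [← p.take_spec h, support_append] at hnodup
  rw [← cons_tail_support, List.mem_cons] at h2
  exact List.disjoint_of_nodup_append hnodup h1 (h2.resolve_left hne)

lemma exists_first_mem (p : G.Walk u v) {S : Set V} (hv : v ∈ S) :
    ∃ w ∈ S, ∃ hw : w ∈ p.support, ∀ x ∈ (p.takeUntil w hw).support, x ∈ S → x = w := by
  induction p with
  | nil => exact ⟨_, hv, start_mem_support _, fun x hx _ => by simpa using hx⟩
  | @cons u _ _ hadj p ih =>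
    by_cases hu : u ∈ S
    · exact ⟨u, hu, start_mem_support _, fun x hx _ => by simpa using hx⟩
    obtain ⟨w, hwS, hw, hfirst⟩ := ih hv
    have huw : u ≠ w := fun h => hu (h ▸ hwS)
    refine ⟨w, hwS, List.mem_of_mem_tail hw, fun x hx hxS => ?_⟩
    rw [takeUntil_cons hw huw hadj, support_cons, List.mem_cons] at hx
    rcases hx with rfl | hx
    exacts [absurd hxS hu, hfirst x hx hxS]

lemma IsPath.exists_subpath_between {p : G.Walk u v} (hp : p.IsPath) {S T : Set V}
    (hu : u ∈ S) (hv : v ∈ T) :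
    ∃ w₁ ∈ S, ∃ w₂ ∈ T, ∃ q : G.Walk w₁ w₂, q.IsPath ∧ q.support ⊆ p.support ∧
      q.length ≤ p.length ∧ ∀ x ∈ q.support, x ≠ w₁ → x ≠ w₂ → x ∉ S ∧ x ∉ T := by
  obtain ⟨w₂, hw₂, hw₂p, hfirst₂⟩ := p.exists_first_mem hv
  set p₂ := p.takeUntil w₂ hw₂p
  obtain ⟨w₁, hw₁, hw₁p, hfirst₁⟩ := p₂.reverse.exists_first_mem (S := S) hu
  set p₁ := p₂.reverse.takeUntil w₁ hw₁p
  have hsub : p₁.support ⊆ p₂.support := fun x hx => by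
    simpa using p₂.reverse.support_takeUntil_subset_support hw₁p hx
  refine ⟨w₁, hw₁, w₂, hw₂, p₁.reverse, ((hp.takeUntil hw₂p).reverse.takeUntil hw₁p).reverse,
    fun x hx => p.support_takeUntil_subset_support hw₂p (hsub (by simpa using hx)), ?_, ?_⟩
  · calc p₁.reverse.length = p₁.length := length_reverse _
      _ ≤ p₂.reverse.length := length_takeUntil_le_length _ _
      _ = p₂.length := length_reverse _
      _ ≤ p.length := length_takeUntil_le_length _ _
  · intro x hx hx₁ hx₂
    rw [support_reverse, List.mem_reverse] at hx
    exact ⟨fun hS => hx₁ (hfirst₁ x hx hS), fun hT => hx₂ (hfirst₂ x (hsub hx) hT)⟩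

end SimpleGraph.Walk

open SimpleGraph.Walk

section IntDisjoint

variable {G : SimpleGraph V} {x y : V}

lemma IntDisjoint.symm {p q : G.Walk x y} (h : IntDisjoint p q) : IntDisjoint q p :=
  fun v hv hv' => h v hv' hv

lemma IntDisjoint.notMem_or_notMem {p q : G.Walk x y} (h : IntDisjoint p q) {v : V}
    (hx : v ≠ x) (hy : v ≠ y) : v ∉ p.support ∨ v ∉ q.support := by
  by_contra! hv
  rcases h v hv.1 hv.2 with rfl | rfl <;> contradiction

lemma connK_two_iff :
    ConnK G 2 x y ↔ ∃ A B : G.Walk x y, A.IsPath ∧ B.IsPath ∧ IntDisjoint A B := by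
  constructor
  · rintro ⟨P, hP, hd⟩
    exact ⟨P 0, P 1, hP 0, hP 1, hd 0 1 (by decide)⟩
  · rintro ⟨A, B, hA, hB, hd⟩
    refine ⟨![A, B], fun i => by fin_cases i <;> assumption, fun i j hij => ?_⟩
    fin_cases i <;> fin_cases j <;> first | exact absurd rfl hij | exact hd | exact hd.symm

variable [DecidableEq V] in
lemma IntDisjoint.eq_or_eq_of_mem_takeUntil_of_mem_dropUntil {p q : G.Walk x y}
    (hp : p.IsPath) (hq : q.IsPath) (hd : IntDisjoint p q) {a b z : V} (ha : a ∈ p.support)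
    (hb : b ∈ q.support) (hzp : z ∈ (p.takeUntil a ha).support)
    (hzq : z ∈ (q.dropUntil b hb).support) : z = a ∨ z = b := by
  rcases hd z (p.support_takeUntil_subset_support ha hzp)
    (q.support_dropUntil_subset_support hb hzq) with rfl | rfl
  · exact .inr (hq.eq_of_mem_takeUntil_of_mem_dropUntil hb (start_mem_support _) hzq)
  · exact .inl (hp.eq_of_mem_takeUntil_of_mem_dropUntil ha hzp (end_mem_support _))

lemma IntDisjoint.reachable_delV {a b z : V} {p q : G.Walk x y}
    (hp : p.IsPath) (hq : q.IsPath) (hd : IntDisjoint p q) (ha : a ∈ p.support)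
    (hb : b ∈ q.support) (hza : z ≠ a) (hzb : z ≠ b) : (delV G z).Reachable a b := by
  classical
  -- one of the two arcs of the cycle `p ∪ q` between `a` and `b` avoids `z`
  by_cases h : z ∈ (p.takeUntil a ha).support ∨ z ∈ (q.takeUntil b hb).support
  · have h1 : z ∉ (p.dropUntil a ha).support := fun hz => by
      rcases h with h | h
      · exact hza (hp.eq_of_mem_takeUntil_of_mem_dropUntil ha h hz)
      · exact (hd.symm.eq_or_eq_of_mem_takeUntil_of_mem_dropUntil hq hp hb ha h hz).elim hzb hza
    have h2 : z ∉ (q.dropUntil b hb).support := fun hz => by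
      rcases h with h | h
      · exact (hd.eq_or_eq_of_mem_takeUntil_of_mem_dropUntil hp hq ha hb h hz).elim hza hzb
      · exact hzb (hq.eq_of_mem_takeUntil_of_mem_dropUntil hb h hz)
    exact ((p.dropUntil a ha).reachable_delV h1).trans ((q.dropUntil b hb).reachable_delV h2).symm
  · rw [not_or] at h
    exact ((p.takeUntil a ha).reachable_delV h.1).symm.trans ((q.takeUntil b hb).reachable_delV h.2)

lemma IntDisjoint.reachable_delV_deleteEdges {a b z : V} {e : Sym2 V}
    {p q : G.Walk x y} (hp : p.IsPath) (hq : q.IsPath) (hd : IntDisjoint p q)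
    (hep : e ∉ p.edges) (heq : e ∉ q.edges) (ha : a ∈ p.support) (hb : b ∈ q.support)
    (hza : z ≠ a) (hzb : z ≠ b) : (delV (G.deleteEdges {e}) z).Reachable a b :=
  IntDisjoint.reachable_delV (p := p.toDeleteEdge e hep) (q := q.toDeleteEdge e heq)
    (IsPath.toDeleteEdges _ _ hp _) (IsPath.toDeleteEdges _ _ hq _)
    (fun v hv hv' => hd v (by simpa using hv) (by simpa using hv'))
    (by simpa using ha) (by simpa using hb) hza hzb

end IntDisjoint

section Menger

variable {H : SimpleGraph V}

/-- The two `s`-`t` paths are `pre` followed by `A` from `w` on, and the edge `sv` followed by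
`B`. -/
lemma connK_two_of_adj_of_isPath [DecidableEq V] {s v t w : V} (hsv : H.Adj s v) (hst : s ≠ t)
    {A B : H.Walk v t} (hA : A.IsPath) (hB : B.IsPath) (hAB : IntDisjoint A B)
    {pre : H.Walk s w} (hpre : pre.IsPath) (hwA : w ∈ A.support)
    (hfirst : ∀ u ∈ pre.support, u ∈ A.support ∨ u ∈ B.support → u = w)
    (hv : v ∉ pre.support) : ConnK H 2 s t := by
  have hwv : w ≠ v := fun h => hv (h ▸ pre.end_mem_support)
  have hwB : w ∈ B.support → w = t := fun h => (hAB w hwA h).resolve_left hwv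
  have hsB : s ∉ B.support := fun h => by
    obtain rfl := hfirst s pre.start_mem_support (.inr h)
    exact hst (hwB h)
  have hvdrop : v ∉ (A.dropUntil w hwA).support := fun h =>
    hwv (hA.eq_of_mem_takeUntil_of_mem_dropUntil hwA (start_mem_support _) h).symm
  refine connK_two_iff.mpr ⟨pre.append (A.dropUntil w hwA), cons hsv B,
    hpre.append_of_forall_mem (hA.dropUntil hwA) fun u hu hu' =>
      hfirst u hu (.inl (A.support_dropUntil_subset_support hwA hu')),
    (cons_isPath_iff _ _).mpr ⟨hB, hsB⟩, fun u hu hu' => ?_⟩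
  rw [support_cons, List.mem_cons] at hu'
  rcases hu' with rfl | huB
  · exact .inl rfl
  rw [mem_support_append_iff] at hu
  rcases hu with hu | hu
  · obtain rfl := hfirst u hu (.inr huB)
    exact .inr (hwB huB)
  · rcases hAB u (A.support_dropUntil_subset_support hwA hu) huB with rfl | rfl
    exacts [absurd hu hvdrop, .inr rfl]

/-- Menger's theorem for two paths. -/
theorem connK_two_of_isPath {s t : V} (P : H.Walk s t) (hP : P.IsPath) (hst : s ≠ t)
    (hsep : ∀ z, z ≠ s → z ≠ t → (delV H z).Reachable s t) : ConnK H 2 s t := by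
  classical
  induction P with
  | nil => exact absurd rfl hst
  | @cons s v t hsv P' ih =>
    obtain ⟨hP', hsP'⟩ := (cons_isPath_iff _ _).mp hP
    by_cases hvt : v = t
    · subst hvt
      have hpath : (cons hsv nil).IsPath := by simpa using hst
      refine connK_two_iff.mpr ⟨_, _, hpath, hpath, fun u hu _ => ?_⟩
      simpa using hu
    have hvs : v ≠ s := hsv.ne.symm
    have hsep' : ∀ z, z ≠ v → z ≠ t → (delV H z).Reachable v t := fun z hzv hzt => by
      by_cases hzs : z = s
      · exact hzs ▸ P'.reachable_delV hsP'
      · exact (show (delV H z).Adj v s from ⟨hsv.symm, Ne.symm hzv, Ne.symm hzs⟩).reachable.trans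
          (hsep z hzs hzt)
    obtain ⟨A, B, hA, hB, hAB⟩ := connK_two_iff.mp (ih hP' hvt hsep')
    -- attach `s` to the two `v`-`t` paths along an `s`-`t` path avoiding `v`
    obtain ⟨ω₀⟩ := hsep v hvs hvt
    set ω := (ω₀.mapLe (fun _ _ h => h.1 : delV H v ≤ H)).bypass
    obtain ⟨w, hw, hwω, hfirst⟩ :=
      ω.exists_first_mem (S := {u | u ∈ A.support ∨ u ∈ B.support}) (.inl A.end_mem_support)
    have hpre := (bypass_isPath _).takeUntil hwω
    have hv : v ∉ (ω.takeUntil w hwω).support := fun h => ω₀.notMem_support_delV hvs.symm <| by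
      simpa using support_bypass_subset_support _ (ω.support_takeUntil_subset_support hwω h)
    rcases hw with hwA | hwB
    · exact connK_two_of_adj_of_isPath hsv hst hA hB hAB hpre hwA hfirst hv
    · exact connK_two_of_adj_of_isPath hsv hst hB hA hAB.symm hpre hwB
        (fun u hu h => hfirst u hu h.symm) hv

end Menger

section Minimal

variable {G : SimpleGraph V} {Q : Set V}

lemma exists_cutVertex_of_not_connK_deleteEdges {s t a c : V} (hst : s ≠ t)
    (hG : ConnK G 2 s t) (has : a ≠ s) (hat : a ≠ t)
    (hnot : ¬ ConnK (G.deleteEdges {s(a, c)}) 2 s t) :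
    ∃ z, z ≠ s ∧ z ≠ t ∧ z ≠ a ∧ ¬ (delV (G.deleteEdges {s(a, c)}) z).Reachable s t ∧
      ¬ (delV (G.deleteEdges {s(a, c)}) z).Reachable a c := by
  obtain ⟨A, B, -, -, hAB⟩ := connK_two_iff.mp hG
  obtain ⟨π₀, hπ₀⟩ : ∃ π : G.Walk s t, s(a, c) ∉ π.edges := by
    rcases hAB.notMem_or_notMem has hat with h | h
    exacts [⟨A, fun he => h (A.fst_mem_support_of_mem_edges he)⟩,
      ⟨B, fun he => h (B.fst_mem_support_of_mem_edges he)⟩]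
  obtain ⟨P, hP⟩ := (π₀.toDeleteEdge _ hπ₀).reachable.exists_isPath
  obtain ⟨z, hzs, hzt, hz⟩ :
      ∃ z, z ≠ s ∧ z ≠ t ∧ ¬ (delV (G.deleteEdges {s(a, c)}) z).Reachable s t := by
    by_contra! h
    exact hnot (connK_two_of_isPath P hP hst h)
  obtain ⟨π, hzπ⟩ : ∃ π : G.Walk s t, z ∉ π.support := by
    rcases hAB.notMem_or_notMem hzs hzt with h | h
    exacts [⟨A, h⟩, ⟨B, h⟩]
  have heπ : s(a, c) ∈ π.edges := by
    by_contra he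
    exact hz (π.reachable_delV_deleteEdges he hzπ)
  refine ⟨z, hzs, hzt, ?_, hz, fun hac => hz (π.reachable_delV_deleteEdges_of_reachable hzπ hac)⟩
  rintro rfl
  exact hzπ (π.fst_mem_support_of_mem_edges heπ)

lemma exists_connK_two_through_of_not_reachable {τ x a c z : V} (hG : ConnK G 2 τ x)
    (haτ : a ≠ τ) (hax : a ≠ x) (hzτ : z ≠ τ) (hzx : z ≠ x)
    (hsep : ¬ (delV (G.deleteEdges {s(a, c)}) z).Reachable τ x) :
    ∃ A B : G.Walk τ x, A.IsPath ∧ B.IsPath ∧ IntDisjoint A B ∧ c ∈ A.support ∧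
      z ∈ B.support := by
  have key : ∀ A B : G.Walk τ x, IntDisjoint A B → z ∉ A.support →
      c ∈ A.support ∧ z ∈ B.support := fun A B hAB hzA => by
    have hit : ∀ W : G.Walk τ x, z ∉ W.support → s(a, c) ∈ W.edges := fun W hzW => by
      by_contra he
      exact hsep (W.reachable_delV_deleteEdges he hzW)
    have heA := hit A hzA
    refine ⟨A.snd_mem_support_of_mem_edges heA, by_contra fun hzB => ?_⟩
    rcases hAB.notMem_or_notMem haτ hax with h | h
    exacts [h (A.fst_mem_support_of_mem_edges heA), h (B.fst_mem_support_of_mem_edges (hit B hzB))]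
  obtain ⟨A, B, hA, hB, hAB⟩ := connK_two_iff.mp hG
  rcases hAB.notMem_or_notMem hzτ hzx with hzA | hzB
  · exact ⟨A, B, hA, hB, hAB, key A B hAB hzA⟩
  · exact ⟨B, A, hB, hA, hAB.symm, key B A hAB.symm hzB⟩

lemma exists_separator_mem_support (hconn : QRConn G Q (fun _ => 2))
    (hmin : ∀ e ∈ G.edgeSet, ¬ QRConn (G.deleteEdges {e}) Q (fun _ => 2))
    {x y a b c : V} (hx : x ∈ Q) (hy : y ∈ Q) {p1 p2 : G.Walk x y} (h1 : p1.IsPath)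
    (h2 : p2.IsPath) (hd : IntDisjoint p1 p2) (hac : G.Adj a c) {R' : G.Walk c b}
    (haR' : a ∉ R'.support) (ha : a ∈ p1.support) (hb : b ∈ p2.support) (haQ : a ∉ Q)
    (hcp1 : c ∉ p1.support) :
    ∃ z ∈ R'.support, ∃ τ ∈ Q, ¬ (delV (G.deleteEdges {s(a, c)}) z).Reachable τ x := by
  have hap2 : a ∉ p2.support := fun h =>
    haQ ((hd a ha h).elim (· ▸ hx) (· ▸ hy))
  obtain ⟨s, hs, t, ht, hst, hnot⟩ :
      ∃ s ∈ Q, ∃ t ∈ Q, s ≠ t ∧ ¬ ConnK (G.deleteEdges {s(a, c)}) 2 s t := by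
    simpa [QRConn] using hmin s(a, c) hac
  obtain ⟨z, hzs, hzt, hza, hzst, hzac⟩ := exists_cutVertex_of_not_connK_deleteEdges hst
    (by simpa using hconn s hs t ht hst) (ne_of_mem_of_not_mem hs haQ).symm
    (ne_of_mem_of_not_mem ht haQ).symm hnot
  have hzR' : z ∈ R'.support := by
    by_contra hzR'
    have hab := hd.reachable_delV_deleteEdges h1 h2
      (fun h => hcp1 (p1.snd_mem_support_of_mem_edges h))
      (fun h => hap2 (p2.fst_mem_support_of_mem_edges h)) ha hb hza
      (fun h => hzR' (h ▸ R'.end_mem_support))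
    refine hzac (hab.trans (R'.reverse.reachable_delV_deleteEdges ?_ (by simpa using hzR')))
    simpa using fun h => haR' (R'.fst_mem_support_of_mem_edges h)
  refine ⟨z, hzR', ?_⟩
  by_cases h : (delV (G.deleteEdges {s(a, c)}) z).Reachable s x
  · exact ⟨t, ht, fun h' => hzst (h.trans h'.symm)⟩
  · exact ⟨s, hs, h⟩

theorem exists_mem_support_of_minimal (hconn : QRConn G Q (fun _ => 2))
    (hmin : ∀ e ∈ G.edgeSet, ¬ QRConn (G.deleteEdges {e}) Q (fun _ => 2))
    {x y a b : V} (hx : x ∈ Q) (hy : y ∈ Q) {p1 p2 : G.Walk x y} (h1 : p1.IsPath)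
    (h2 : p2.IsPath) (hd : IntDisjoint p1 p2) (R : G.Walk a b) (hR : R.IsPath)
    (ha : a ∈ p1.support) (hb : b ∈ p2.support)
    (hint : ∀ w ∈ R.support, w ≠ a → w ≠ b → w ∉ p1.support ∧ w ∉ p2.support) :
    ∃ q ∈ R.support, q ∈ Q := by
  classical
  induction hn : R.length using Nat.strong_induction_on generalizing x y a b with
  | _ n ih =>
  by_contra! hRQ
  have haQ : a ∉ Q := hRQ a R.start_mem_support
  have hbp1 : b ∉ p1.support := fun h =>
    hRQ b R.end_mem_support ((hd b h hb).elim (· ▸ hx) (· ▸ hy))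
  obtain ⟨c, hac, R', rfl⟩ : ∃ c, ∃ hac : G.Adj a c, ∃ R' : G.Walk c b, R = cons hac R' := by
    cases R with
    | nil => exact absurd ha hbp1
    | cons hac R' => exact ⟨_, hac, R', rfl⟩
  obtain ⟨hR', haR'⟩ := (cons_isPath_iff _ _).mp hR
  have hcp1 : c ∉ p1.support := by
    by_cases hcb : c = b
    · exact hcb ▸ hbp1
    · exact (hint c (by simp) (fun h => haR' (h ▸ R'.start_mem_support)) hcb).1
  obtain ⟨z, hzR', τ, hτ, hτx⟩ := exists_separator_mem_support hconn hmin hx hy h1 h2 hd hac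
    haR' ha hb haQ hcp1
  have hzQ : z ∉ Q := hRQ z (by simp [hzR'])
  have hτx' : τ ≠ x := by
    rintro rfl
    exact hτx .rfl
  obtain ⟨A, B, hA, hB, hAB, hcA, hzB⟩ := exists_connK_two_through_of_not_reachable
    (by simpa using hconn τ hτ x hx hτx') (ne_of_mem_of_not_mem hτ haQ).symm
    (ne_of_mem_of_not_mem hx haQ).symm (ne_of_mem_of_not_mem hτ hzQ).symm
    (ne_of_mem_of_not_mem hx hzQ).symm hτx
  obtain ⟨w₁, hw₁, w₂, hw₂, P, hP, hPR, hPlen, hPint⟩ :=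
    (hR'.takeUntil hzR').exists_subpath_between (S := {u | u ∈ A.support})
      (T := {u | u ∈ B.support}) hcA hzB
  have hlt : P.length < n := by
    have := R'.length_takeUntil_le_length hzR'
    rw [← hn, length_cons]
    omega
  obtain ⟨q, hq, hqQ⟩ := ih _ hlt hτ hx hA hB hAB P hP hw₁ hw₂ hPint rfl
  exact hRQ q (by simp [R'.support_takeUntil_subset_support hzR' (hPR hq)]) hqQ

end Minimal

theorem stmt_13_general (G : SimpleGraph V) (Q : Set V)
    (hmin : MinQR G Q (fun _ => 2))
    (x y : V) (hx : x ∈ Q) (hy : y ∈ Q)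
    (p1 p2 : G.Walk x y) (h1 : p1.IsPath) (h2 : p2.IsPath)
    (hd : IntDisjoint p1 p2)
    (a b : V) (R : G.Walk a b) (hR : R.IsPath)
    (ha : a ∈ p1.support) (hb : b ∈ p2.support)
    (hint : ∀ w ∈ R.support, w ≠ a → w ≠ b → w ∉ p1.support ∧ w ∉ p2.support) :
    ∃ q ∈ R.support, q ∈ Q :=
  exists_mem_support_of_minimal hmin.1 hmin.2.1 hx hy h1 h2 hd R hR ha hb hint

/-- In a graph that minimally biconnects `Q`, for terminals `x, y`
and any two internally vertex-disjoint `x`-`y` paths `p₁, p₂`, every path joining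
a vertex of `p₁` to a vertex of `p₂` off `p₁ ∪ p₂` contains a terminal. -/
theorem stmt_13 (G : SimpleGraph V) (Q : Set V)
    (hmin : MinQR G Q (fun _ => 2))
    (x y : V) (hx : x ∈ Q) (hy : y ∈ Q) (hxy : x ≠ y)
    (p1 p2 : G.Walk x y) (h1 : p1.IsPath) (h2 : p2.IsPath)
    (hd : IntDisjoint p1 p2)
    (a b : V) (R : G.Walk a b) (hR : R.IsPath)
    (ha : a ∈ p1.support) (hb : b ∈ p2.support)
    (hint : ∀ w ∈ R.support, w ≠ a → w ≠ b → w ∉ p1.support ∧ w ∉ p2.support) :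
    ∃ q ∈ R.support, q ∈ Q :=
  stmt_13_general G Q hmin x y hx hy p1 p2 h1 h2 hd a b R hR ha hb hint
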